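/- arXiv:2108.10578 — 2 statements merged into one kernel-verified Lean document; each statement's English description precedes it below -/
import Mathlib

section
/- If d divides n, then ψ_d divides ψ_n in the ring of polynomials, and the quotient ψ_n/ψ_d is a polynomial of degree n−d. -/
open Polynomial Real

noncomputable def psi : ℕ → Polynomial ℝ
  | 0 => 0
  | 1 => 1
  | (n + 2) => Polynomial.X * psi (n + 1) - psi n

lemma psi_rec (k : ℕ) : psi (k + 2) = Polynomial.X * psi (k + 1) - psi k := rfl

lemma psi_add (m : ℕ) : ∀ n : ℕ,
    psi (m + n + 2) = psi (m + 2) * psi (n + 1) - psi (m + 1) * psi n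
  | 0 => by simp [psi]
  | 1 => by
      rw [show m + 1 + 2 = (m + 1) + 2 from rfl, psi_rec (m + 1),
        show (2 : ℕ) = 0 + 2 from rfl, psi_rec 0]
      simp [psi]
      ring
  | (n + 2) => by
      have h1 := psi_add m (n + 1)
      have h0 := psi_add m n
      rw [show m + (n + 2) + 2 = (m + n + 2) + 2 from by ring, psi_rec (m + n + 2),
        show m + n + 2 + 1 = m + (n + 1) + 2 from by ring, h1, h0,
        show n + 2 + 1 = (n + 1) + 2 from rfl, psi_rec (n + 1), psi_rec n]
      ring

lemma psi_monic_deg : ∀ n : ℕ, (psi (n + 1)).Monic ∧ (psi (n + 1)).natDegree = n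
  | 0 => by simp [psi, monic_one]
  | 1 => by
      have h : psi 2 = X := by rw [show (2:ℕ) = 0 + 2 from rfl, psi_rec 0]; simp [psi]
      simp [h, monic_X]
  | (n + 2) => by
      obtain ⟨h1m, h1d⟩ := psi_monic_deg (n + 1)
      obtain ⟨h0m, h0d⟩ := psi_monic_deg n
      have hXm : (X * psi (n + 2)).Monic := monic_X.mul h1m
      have hXd : (X * psi (n + 2)).natDegree = n + 2 := by
        rw [natDegree_mul X_ne_zero h1m.ne_zero, natDegree_X, h1d]; omega
      have hlt : (-psi (n + 1)).degree < (X * psi (n + 2)).degree := by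
        rw [degree_neg, degree_eq_natDegree h0m.ne_zero,
          degree_eq_natDegree hXm.ne_zero, hXd, h0d]
        exact_mod_cast by omega
      have hm : (X * psi (n + 2) + -psi (n + 1)).Monic := hXm.add_of_left hlt
      have hdd : (X * psi (n + 2) + -psi (n + 1)).degree = (X * psi (n + 2)).degree :=
        degree_add_eq_left_of_degree_lt hlt
      rw [degree_eq_natDegree hm.ne_zero, degree_eq_natDegree hXm.ne_zero, hXd] at hdd
      constructor
      · rw [show n + 2 + 1 = (n + 1) + 2 from rfl, psi_rec (n + 1), sub_eq_add_neg]
        exact hm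
      · rw [show n + 2 + 1 = (n + 1) + 2 from rfl, psi_rec (n + 1), sub_eq_add_neg]
        exact_mod_cast hdd

lemma psi_dvd_mul (d : ℕ) (hd : 1 ≤ d) : ∀ k : ℕ, psi d ∣ psi (k * d)
  | 0 => by simp [psi]
  | (k + 1) => by
      have ih := psi_dvd_mul d hd k
      rcases Nat.eq_zero_or_pos k with rfl | hk
      · simp
      · obtain ⟨e, rfl⟩ : ∃ e, d = e + 1 := ⟨d - 1, by omega⟩
        obtain ⟨m, hm⟩ : ∃ m, k * (e + 1) = m + 1 :=
          ⟨k * (e + 1) - 1, by have := Nat.mul_le_mul hk (le_refl (e + 1)); omega⟩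
        have e2 : (k + 1) * (e + 1) = m + e + 2 := by
          have h : k * (e + 1) = m + 1 := hm
          nlinarith [h]
        rw [e2, psi_add]
        rw [hm] at ih
        exact dvd_sub (dvd_mul_left _ _) (ih.mul_right _)

theorem psi_dvd_of_dvd (d n : ℕ) (hd : 1 ≤ d) (hdn : d ∣ n) :
    psi d ∣ psi n ∧ (psi n / psi d).natDegree = n - d := by
  obtain ⟨k, rfl⟩ := hdn
  have hdvd : psi d ∣ psi (d * k) := by rw [mul_comm]; exact psi_dvd_mul d hd k
  refine ⟨hdvd, ?_⟩
  rcases Nat.eq_zero_or_pos k with rfl | hk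
  · rw [Nat.mul_zero, show psi 0 = 0 from rfl, EuclideanDomain.zero_div]
    simp
  · have hn1 : 1 ≤ d * k := Nat.le_trans hd (Nat.le_mul_of_pos_right d hk)
    obtain ⟨dm, hdm⟩ : ∃ m, d = m + 1 := ⟨d - 1, by omega⟩
    obtain ⟨nm, hnm⟩ : ∃ m, d * k = m + 1 := ⟨d * k - 1, by omega⟩
    have hdmon := psi_monic_deg dm
    have hnmon := psi_monic_deg nm
    rw [← hdm] at hdmon
    rw [← hnm] at hnmon
    obtain ⟨c, hc⟩ := hdvd
    have hd0 : psi d ≠ 0 := hdmon.1.ne_zero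
    have hn0 : psi (d * k) ≠ 0 := hnmon.1.ne_zero
    have hc0 : c ≠ 0 := by rintro rfl; simp [hc] at hn0
    have hq : psi (d * k) / psi d = c := by
      rw [hc]; exact mul_div_cancel_left₀ c hd0
    rw [hq]
    have hdeg := hnmon.2
    rw [hc, natDegree_mul hd0 hc0, hdmon.2] at hdeg
    omega
end

section
/- A complex number μ is a root of D if and only if μ is an eigenvalue of the discrete boundary value problem, i.e., there exists a nonzero vector (y_0,…,y_{l+1}) with y_0 = y_{l+1} = 0 satisfying y_{j+1} + y_{j−1} − w_j y_m = μ y_j for j = 1,…,l. -/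
open Polynomial

/-- A solution of the homogeneous three-term recurrence that vanishes at `m-1` and `m`
vanishes on all of `[0, l+1]`. -/
lemma tri_zero (l m : ℕ) (hm : 1 ≤ m) (hml : m ≤ l) (μ : ℂ) (z : ℕ → ℂ)
    (h0 : z (m - 1) = 0) (h1 : z m = 0)
    (hrec : ∀ j, 1 ≤ j → j ≤ l → z (j + 1) + z (j - 1) = μ * z j) :
    ∀ j, j ≤ l + 1 → z j = 0 := by
  have fwd : ∀ k, m + k ≤ l + 1 → z (m + k) = 0 ∧ z (m + k - 1) = 0 := by
    intro k
    induction k with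
    | zero => exact fun _ => ⟨h1, h0⟩
    | succ n ih =>
      intro hk
      obtain ⟨hz1, hz2⟩ := ih (by omega)
      have hr := hrec (m + n) (by omega) (by omega)
      rw [hz1, hz2] at hr
      have key : z (m + n + 1) = 0 := by
        have : z (m + n + 1) + 0 = μ * 0 := hr
        simpa using this
      constructor
      · exact key
      · show z (m + n + 1 - 1) = 0
        simpa using hz1
  have bwd : ∀ k, k ≤ m → z (m - k) = 0 := by
    intro k
    induction k using Nat.strong_induction_on with
    | _ k ih =>
      intro hk
      match k, ih, hk with
      | 0, ih, hk => simpa using h1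
      | 1, ih, hk => exact h0
      | (k + 2), ih, hk =>
        have h1' := ih (k + 1) (by omega) (by omega)
        have h2' := ih k (by omega) (by omega)
        have hr := hrec (m - (k + 1)) (by omega) (by omega)
        have e1 : m - (k + 1) + 1 = m - k := by omega
        have e2 : m - (k + 1) - 1 = m - (k + 2) := by omega
        rw [e1, e2, h1', h2'] at hr
        have : 0 + z (m - (k + 2)) = μ * 0 := hr
        simpa using this
  intro j hj
  rcases le_or_gt m j with h | h
  · have := (fwd (j - m) (by omega)).1
    rwa [show m + (j - m) = j from by omega] at this
  · have := bwd (m - j) (by omega)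
    rwa [show m - (m - j) = j from by omega] at this

theorem D_root_iff_eigenvalue (l m : ℕ) (hm : 1 ≤ m) (hml : m ≤ l) (w : ℕ → ℂ)
    (P Q : ℕ → Polynomial ℂ)
    (hrecP : ∀ j, 1 ≤ j → j ≤ l →
      P (j + 1) + P (j - 1) - Polynomial.C (w j) * P m = Polynomial.X * P j)
    (hP1 : P (m - 1) = 1) (hP2 : P m = 0)
    (hrecQ : ∀ j, 1 ≤ j → j ≤ l →
      Q (j + 1) + Q (j - 1) - Polynomial.C (w j) * Q m = Polynomial.X * Q j)
    (hQ1 : Q (m - 1) = 0) (hQ2 : Q m = 1) (μ : ℂ) :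
    (P 0 * Q (l + 1) - P (l + 1) * Q 0).eval μ = 0 ↔
    ∃ y : ℕ → ℂ, (∃ j ≤ l + 1, y j ≠ 0) ∧ y 0 = 0 ∧ y (l + 1) = 0 ∧
      ∀ j, 1 ≤ j → j ≤ l → y (j + 1) + y (j - 1) - w j * y m = μ * y j := by
  set p : ℕ → ℂ := fun j => (P j).eval μ with hp_def
  set q : ℕ → ℂ := fun j => (Q j).eval μ with hq_def
  have hp : ∀ j, 1 ≤ j → j ≤ l → p (j + 1) + p (j - 1) - w j * p m = μ * p j := by
    intro j h1 h2
    have := congrArg (Polynomial.eval μ) (hrecP j h1 h2)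
    simpa [hp_def] using this
  have hq : ∀ j, 1 ≤ j → j ≤ l → q (j + 1) + q (j - 1) - w j * q m = μ * q j := by
    intro j h1 h2
    have := congrArg (Polynomial.eval μ) (hrecQ j h1 h2)
    simpa [hq_def] using this
  have hp1 : p (m - 1) = 1 := by simp [hp_def, hP1]
  have hp2 : p m = 0 := by simp [hp_def, hP2]
  have hq1 : q (m - 1) = 0 := by simp [hq_def, hQ1]
  have hq2 : q m = 1 := by simp [hq_def, hQ2]
  have hD : (P 0 * Q (l + 1) - P (l + 1) * Q 0).eval μ
      = p 0 * q (l + 1) - p (l + 1) * q 0 := by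
    simp [hp_def, hq_def]
  rw [hD]
  -- any linear combination satisfies the inhomogeneous recurrence
  have comb : ∀ c d : ℂ, ∀ j, 1 ≤ j → j ≤ l →
      (c * p (j + 1) + d * q (j + 1)) + (c * p (j - 1) + d * q (j - 1))
        - w j * (c * p m + d * q m) = μ * (c * p j + d * q j) := by
    intro c d j h1 h2
    linear_combination c * hp j h1 h2 + d * hq j h1 h2
  constructor
  · -- D(μ) = 0 → eigenvector exists
    intro hDμ
    by_cases hA : p 0 = 0 ∧ q 0 = 0
    · by_cases hB : q (l + 1) = 0
      · refine ⟨q, ⟨m, by omega, by rw [hq2]; exact one_ne_zero⟩, hA.2, hB, hq⟩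
      · refine ⟨fun j => q (l + 1) * p j + (-(p (l + 1))) * q j,
          ⟨m - 1, by omega, ?_⟩, ?_, ?_, comb _ _⟩
        · simpa [hp1, hq1] using hB
        · simp [hA.1, hA.2]
        · ring
    · refine ⟨fun j => q 0 * p j + (-(p 0)) * q j, ?_, by ring, ?_, comb _ _⟩
      · rcases (not_and_or.mp hA) with h | h
        · exact ⟨m, by omega, by simpa [hp2, hq2] using h⟩
        · exact ⟨m - 1, by omega, by simpa [hp1, hq1] using h⟩
      · linear_combination -hDμ
  · -- eigenvector exists → D(μ) = 0
    rintro ⟨y, ⟨j0, hj0, hyj0⟩, hy0, hyl, hyrec⟩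
    set a := y (m - 1) with ha_def
    set b := y m with hb_def
    set z : ℕ → ℂ := fun j => y j - a * p j - b * q j with hz_def
    have hz0 : z (m - 1) = 0 := by simp [hz_def, hp1, hq1, ha_def]
    have hz1 : z m = 0 := by simp [hz_def, hp2, hq2, hb_def]
    have hzrec : ∀ j, 1 ≤ j → j ≤ l → z (j + 1) + z (j - 1) = μ * z j := by
      intro j h1 h2
      have h3 := hyrec j h1 h2
      have h4 := hp j h1 h2
      have h5 := hq j h1 h2
      simp only [hz_def]
      rw [hp2, hq2] at *
      linear_combination h3 - a * h4 - b * h5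
    have hzero := tri_zero l m hm hml μ z hz0 hz1 hzrec
    have hy : ∀ j, j ≤ l + 1 → y j = a * p j + b * q j := by
      intro j hj
      have := hzero j hj
      simp only [hz_def] at this
      linear_combination this
    have e0 : a * p 0 + b * q 0 = 0 := by rw [← hy 0 (by omega)]; exact hy0
    have e1 : a * p (l + 1) + b * q (l + 1) = 0 := by
      rw [← hy (l + 1) le_rfl]; exact hyl
    have hab : a ≠ 0 ∨ b ≠ 0 := by
      by_contra h
      push_neg at h
      have h' := hy j0 hj0
      rw [h.1, h.2] at h'
      simp at h'
      exact hyj0 h'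
    rcases hab with ha | hb
    · have key : a * (p 0 * q (l + 1) - p (l + 1) * q 0) = 0 := by
        linear_combination q (l + 1) * e0 - q 0 * e1
      exact (mul_eq_zero.mp key).resolve_left ha
    · have key : b * (p 0 * q (l + 1) - p (l + 1) * q 0) = 0 := by
        linear_combination p 0 * e1 - p (l + 1) * e0
      exact (mul_eq_zero.mp key).resolve_left hb
end
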